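/- arXiv:1309.7493 — 8 statements merged into one kernel-verified Lean document; each statement's English description precedes it below -/
import Mathlib

section
/- Let I be a general ring and a ∈ QN(I). Then both a and -a are quasiregular, i.e., a, -a ∈ Q(I), and moreover -a ∈ QN(I). Consequently QN(I) ⊆ Q(I). -/
/-!
Since `a` commutes with itself, `a * a` is quasiregular. In the unitization, `q` is quasiregular
exactly when `1 - q` is a unit, and `1 - a * a = (1 - a) * (1 + a)` is a product of commuting
factors, so both `1 - a` and `1 + a` are units.
-/

variable {I : Type*} [NonUnitalRing I]

/-- quasiregular elements: p * q = 0 = q * p with p*q = p+q-pq -/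
def inQ (a : I) : Prop := ∃ p : I, p + a - p * a = 0 ∧ a + p - a * p = 0

def inQN (a : I) : Prop := ∀ x : I, a * x = x * a → inQ (a * x)

def inComm2 (a x : I) : Prop := ∀ y : I, y * a = a * y → x * y = y * x

def IsQuasipolarElem (a : I) : Prop :=
  ∃ p : I, p * p = p ∧ inComm2 a p ∧ inQ (a + p) ∧ inQN (a - a * p)

/-- pw a n = a^(n+1) -/
def pw (a : I) : ℕ → I
  | 0 => a
  | n + 1 => pw a n * a

def IsSPiReg (a : I) : Prop := ∃ n : ℕ, ∃ x : I, a * x = x * a ∧ pw a n = pw a (n + 1) * x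

def IsNilp (a : I) : Prop := ∃ n : ℕ, pw a n = 0

def IsStrReg (a : I) : Prop := ∃ b : I, a * b = b * a ∧ a = a * b * a

lemma inQ_iff_isQuasiregular_neg (a : I) : inQ a ↔ IsQuasiregular (-a) := by
  rw [isQuasiregular_iff]
  constructor
  · rintro ⟨p, hpa, hap⟩
    refine ⟨-p, ?_, ?_⟩
    · rw [← neg_eq_zero, ← hap]; noncomm_ring
    · rw [← neg_eq_zero, ← hpa]; noncomm_ring
  · rintro ⟨y, hya, hay⟩
    refine ⟨-y, ?_, ?_⟩
    · rw [← neg_eq_zero, ← hay]; noncomm_ring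
    · rw [← neg_eq_zero, ← hya]; noncomm_ring

lemma inQ_iff_isUnit (a : I) : inQ a ↔ IsUnit (1 - (a : Unitization ℤ I)) := by
  rw [inQ_iff_isQuasiregular_neg, isQuasiregular_iff_isUnit' ℤ, Unitization.inr_neg,
    sub_eq_add_neg]

lemma inQ_and_inQ_neg_of_inQ_mul_self {a : I} (h : inQ (a * a)) : inQ a ∧ inQ (-a) := by
  let u : Unitization ℤ I := a
  have hfactor : 1 - ((a * a : I) : Unitization ℤ I) = (1 - u) * (1 - -u) := by
    simp only [Unitization.inr_mul, u]; noncomm_ring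
  have hcomm : Commute (1 - u) (1 - -u) := by
    rw [Commute, SemiconjBy]; noncomm_ring
  rw [inQ_iff_isUnit, hfactor, hcomm.isUnit_mul_iff] at h
  rwa [inQ_iff_isUnit, inQ_iff_isUnit, Unitization.inr_neg]

lemma inQN.neg {a : I} (h : inQN a) : inQN (-a) := by
  intro x hx
  have hx' : a * -x = -x * a := by simpa only [mul_neg, neg_mul, neg_inj] using hx
  simpa only [mul_neg, neg_mul] using h (-x) hx'

theorem stmt2 (a : I) (h : inQN a) : inQ a ∧ inQ (-a) ∧ inQN (-a) := by
  obtain ⟨ha, hna⟩ := inQ_and_inQ_neg_of_inQ_mul_self (h a rfl)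
  exact ⟨ha, hna, h.neg⟩
end

section
/- An element a of a general ring I is strongly π-regular (a^n = a^{n+1}x for some n ≥ 1 and x commuting with a) if and only if there exists b ∈ comm(a) with ab² = b and a²b - a nilpotent. -/
variable {I : Type*} [NonUnitalRing I]

lemma pw_comm (a x : I) (h : a * x = x * a) : ∀ n, pw a n * x = x * pw a n
  | 0 => h
  | n + 1 => by rw [pw, mul_assoc, h, ← mul_assoc, pw_comm a x h n, mul_assoc]

lemma pw_add (a : I) (i j : ℕ) : pw a i * pw a j = pw a (i + j + 1) := by
  induction j with
  | zero => rfl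
  | succ j ih => rw [pw, ← mul_assoc, ih]; rfl

lemma pw_neg (a : I) : ∀ n, pw (-a) n = pw a n ∨ pw (-a) n = -pw a n
  | 0 => Or.inr rfl
  | n + 1 => by
      rcases pw_neg a n with h | h
      · right; rw [pw, h, mul_neg]; rfl
      · left; rw [pw, h, neg_mul_neg]; rfl

lemma pw_neg_zero {a : I} {n : ℕ} (h : pw (-a) n = 0) : pw a n = 0 := by
  rcases pw_neg a n with h' | h' <;> rw [h'] at h
  · exact h
  · exact neg_eq_zero.mp h

lemma pw_neg_zero' {a : I} {n : ℕ} (h : pw a n = 0) : pw (-a) n = 0 := by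
  rcases pw_neg a n with h' | h' <;> rw [h', h]; exact neg_zero

lemma pw_sub_idem (a e : I) (he : e * e = e) (hc : a * e = e * a) :
    ∀ n, pw (a - a * e) n = pw a n - pw a n * e
  | 0 => rfl
  | n + 1 => by
      have hea : e * (a * e) = a * e := by rw [← mul_assoc, ← hc, mul_assoc, he]
      rw [pw, pw_sub_idem a e he hc n, pw]
      rw [sub_mul, mul_sub, mul_sub, mul_assoc (pw a n) e a, ← hc,
        mul_assoc (pw a n) e (a * e), hea, sub_self, sub_zero, mul_assoc]

lemma pw_idem_mul {a b : I} (hab : a * b = b * a) (habb : a * (b * b) = b) :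
    (a * b) * (a * b) = a * b := by
  rw [mul_assoc, ← mul_assoc b a b, ← hab, mul_assoc, ← mul_assoc, ← mul_assoc,
    mul_assoc (a*a) b b, mul_assoc a a (b*b), habb]

lemma pw_step {a x : I} (hc : a * x = x * a) {m : ℕ} (hm : pw a m = pw a (m + 1) * x) :
    ∀ k, pw a m = pw a (m + 1 + k) * pw x k := by
  have H : ∀ j, pw a (m + j + 1) = pw a (m + j + 2) * x := by
    intro j
    rw [show m + j + 1 = j + m + 1 from by omega, ← pw_add, hm, ← mul_assoc, pw_add,
      show j + (m+1) + 1 = m + j + 2 from by omega]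
  intro k
  induction k with
  | zero => exact hm
  | succ k ih =>
      have hx : x * pw x k = pw x (k + 1) := (pw_comm x x rfl k).symm
      rw [ih, show m + 1 + k = m + k + 1 from by omega, H k, mul_assoc, hx,
        show m + k + 2 = m + 1 + (k + 1) from by omega]

theorem stmt7 (a : I) :
    IsSPiReg a ↔ ∃ b : I, a * b = b * a ∧ a * (b * b) = b ∧ IsNilp (a * a * b - a) := by
  constructor
  · rintro ⟨m, x, hc, hm⟩
    have hs := pw_step hc hm (m + 1)
    have haP : a * pw a m = pw a m * a := (pw_comm a a rfl m).symm
    have haQ : a * pw x (m + 1) = pw x (m + 1) * a := (pw_comm x a hc.symm (m + 1)).symm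
    have hPQ : pw a m * pw x (m + 1) = pw x (m + 1) * pw a m := pw_comm a _ haQ m
    set b := pw a m * pw x (m + 1) with hb
    have hab : a * b = b * a := by
      rw [hb, ← mul_assoc, haP, mul_assoc, haQ, ← mul_assoc]
    have habb : a * (b * b) = b := by
      rw [hb, mul_assoc (pw a m) (pw x (m + 1)) _, ← mul_assoc (pw x (m + 1)) (pw a m) _,
        ← hPQ, mul_assoc (pw a m) (pw x (m + 1)) (pw x (m + 1)),
        ← mul_assoc (pw a m) (pw a m) _, pw_add a m m, pw_add x (m + 1) (m + 1),
        ← mul_assoc a]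
      have h2 : a * pw a (m + m + 1) = pw a (m + m + 2) := (pw_comm a a rfl (m + m + 1)).symm
      rw [h2]
      conv_rhs => rw [hs]
      rw [mul_assoc, pw_add x (m + 1) (m + 1), show m + 1 + (m + 1) = m + m + 2 from by omega]
    refine ⟨b, hab, habb, ?_⟩
    have he := pw_idem_mul hab habb
    have hae : a * (a * b) = (a * b) * a := by
      conv_lhs => rw [hab]
      rw [← mul_assoc]
    have key := pw_sub_idem a (a * b) he hae m
    have hfix : pw a m * (a * b) = pw a m := by
      rw [hb, ← mul_assoc (pw a m) a _, show pw a m * a = pw a (m + 1) from rfl,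
        ← mul_assoc (pw a (m + 1)) (pw a m) (pw x (m + 1)), pw_add a (m + 1) m,
        show m + 1 + m + 1 = m + 1 + (m + 1) from by omega, ← hs]
    have h0 : pw (a - a * (a * b)) m = 0 := by rw [key, hfix, sub_self]
    refine ⟨m, ?_⟩
    have heq : a * a * b - a = -(a - a * (a * b)) := by rw [neg_sub, mul_assoc]
    rw [heq]
    exact pw_neg_zero' h0
  · rintro ⟨b, hab, habb, n, hnil⟩
    refine ⟨n, b, hab, ?_⟩
    have he := pw_idem_mul hab habb
    have hae : a * (a * b) = (a * b) * a := by
      conv_lhs => rw [hab]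
      rw [← mul_assoc]
    have key := pw_sub_idem a (a * b) he hae n
    have h0 : pw (a - a * (a * b)) n = 0 := by
      have : a - a * (a * b) = -(a * a * b - a) := by rw [neg_sub, mul_assoc]
      rw [this]
      exact pw_neg_zero' hnil
    rw [h0] at key
    have : pw a n = pw a n * (a * b) := sub_eq_zero.mp key.symm
    rw [pw, mul_assoc]
    exact this
end

section
/- An element a of a general ring I is strongly π-regular if and only if there exists b ∈ comm²(a) with ab² = b and a²b - a nilpotent. -/
/-!
Pass to the unitization `Unitization ℤ I`, where powers exist. If `a ^ N = a ^ (N + 1) * x` with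
`x` commuting with `a`, then `b = a ^ N * x ^ (N + 1)` is a Drazin inverse of `a`. The idempotent
`e = a * b` satisfies `e * y * (1 - e) = 0 = (1 - e) * y * e` for every `y` commuting with `a`,
since `e` is both a left and a right multiple of `a ^ N`, which `1 - e` kills; so `y` commutes
with `e`, and then with `b = b * e = e * b`. Conversely, `a * a * b - a = -a * (1 - a * b)` with
`1 - a * b` idempotent, so its powers are `±(a ^ n - a ^ (n + 1) * b)`, and nilpotency is
exactly the strong π-regularity relation with `x = b`.
-/

variable {I : Type*} [NonUnitalRing I]

section Monoid

variable {M : Type*} [Monoid M] {a b x y : M}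

theorem mul_pow_eq_self_of_mul_eq_self {z c : M} (h : z * c = z) (k : ℕ) : z * c ^ k = z := by
  induction k with
  | zero => rw [pow_zero, mul_one]
  | succ k ih => rw [pow_succ, ← mul_assoc, ih, h]

theorem mul_eq_mul_mul_of_commute {e p q : M} (hy : Commute y p) (hpe : p * e = p)
    (hqp : q * p = e) : e * y = e * y * e :=
  calc e * y = q * (y * p) := by rw [← hqp, mul_assoc, hy.eq]
    _ = q * (y * (p * e)) := by rw [hpe]
    _ = e * y * e := by rw [← mul_assoc y, hy.eq, ← hqp]; simp only [mul_assoc]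

theorem isIdempotentElem_mul_of_mul_mul_self (hab : Commute a b) (hb : a * (b * b) = b) :
    IsIdempotentElem (a * b) := by
  rw [IsIdempotentElem, mul_assoc, hab.symm.left_comm, hb]

structure IsDrazinInverse (a b : M) : Prop where
  commute : Commute a b
  mul_mul_self : a * (b * b) = b
  exists_pow_eq : ∃ k : ℕ, a ^ k = a ^ (k + 1) * b

namespace IsDrazinInverse

theorem of_pow_eq_pow_succ_mul (hax : Commute a x) {N : ℕ} (h : a ^ N = a ^ (N + 1) * x) :
    IsDrazinInverse a (a ^ N * x ^ (N + 1)) := by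
  have hN : a ^ (N + 1) * (a ^ N * x ^ (N + 1)) = a ^ N := by
    have hc : a ^ N * (a * x) = a ^ N := by rw [← mul_assoc, ← pow_succ, ← h]
    rw [← mul_assoc, ← pow_add, add_comm, pow_add, mul_assoc, ← hax.mul_pow,
      mul_pow_eq_self_of_mul_eq_self hc]
  have hb : Commute (a ^ N * x ^ (N + 1)) (a ^ N) :=
    (Commute.pow_pow_self a N N).mul_left (hax.pow_pow N (N + 1)).symm
  refine ⟨((Commute.refl a).pow_right N).mul_right (hax.pow_right _), ?_, N, hN.symm⟩
  calc a * ((a ^ N * x ^ (N + 1)) * (a ^ N * x ^ (N + 1)))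
      = a ^ (N + 1) * (a ^ N * x ^ (N + 1)) * x ^ (N + 1) := by
        rw [← mul_assoc _ (a ^ N), hb.eq, pow_succ' a N]; simp only [mul_assoc]
    _ = a ^ N * x ^ (N + 1) := by rw [hN]

variable (h : IsDrazinInverse a b)
include h

theorem exists_pow_succ_eq : ∃ n : ℕ, a ^ (n + 1) = a ^ (n + 2) * b := by
  obtain ⟨k, hk⟩ := h.exists_pow_eq
  exact ⟨k, by rw [pow_succ' a k, hk, ← mul_assoc, ← pow_succ']⟩

theorem commute_mul_of_commute (hy : Commute y a) : Commute y (a * b) := by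
  obtain ⟨n, hn⟩ := h.exists_pow_succ_eq
  have he := isIdempotentElem_mul_of_mul_mul_self h.commute h.mul_mul_self
  have hpe : a ^ (n + 1) * (a * b) = a ^ (n + 1) := by rw [← mul_assoc, ← pow_succ, ← hn]
  have hqp : b ^ (n + 1) * a ^ (n + 1) = a * b := by
    rw [← (h.commute.symm.mul_pow _), ← h.commute.eq, he.pow_succ_eq]
  have hpq : a ^ (n + 1) * b ^ (n + 1) = a * b := by
    rw [← (h.commute.mul_pow _), he.pow_succ_eq]
  have hep : a * b * a ^ (n + 1) = a ^ (n + 1) := by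
    rw [((Commute.self_pow a _).mul_left (h.commute.symm.pow_right _)).eq, hpe]
  have hl := mul_eq_mul_mul_of_commute (hy.pow_right (n + 1)) hpe hqp
  -- the mirror image of `hl`, read in the opposite monoid
  have hr := mul_eq_mul_mul_of_commute (M := Mᵐᵒᵖ) (e := .op (a * b)) (y := .op y)
    (hy.pow_right (n + 1)).op (by rw [← MulOpposite.op_mul, hep])
    (by rw [← MulOpposite.op_mul, hpq])
  have hr' : y * (a * b) = a * b * y * (a * b) :=
    MulOpposite.op_injective (by simpa only [MulOpposite.op_mul, mul_assoc] using hr)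
  exact hr'.trans hl.symm

theorem commute_of_commute (hy : Commute y a) : Commute y b := by
  have hye := h.commute_mul_of_commute hy
  have hey : a * b * y = b * y * a := by rw [h.commute.eq, mul_assoc, ← hy.eq, mul_assoc]
  calc y * b = y * (a * (b * b)) := by rw [h.mul_mul_self]
    _ = b * y * (a * b) := by
      rw [← mul_assoc a, ← mul_assoc, hye.eq, hey]; simp only [mul_assoc]
    _ = b * y := by
      rw [mul_assoc, hye.eq, ← mul_assoc, h.commute.symm.left_comm, h.mul_mul_self]

end IsDrazinInverse

end Monoid

theorem sub_mul_pow_succ_eq_zero_iff {R : Type*} [Ring R] {a b : R} (hab : Commute a b)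
    (hb : a * (b * b) = b) (n : ℕ) :
    (a * a * b - a) ^ (n + 1) = 0 ↔ a ^ (n + 1) = a ^ (n + 2) * b := by
  have he := (isIdempotentElem_mul_of_mul_mul_self hab hb).one_sub
  have ha : Commute a (1 - a * b) :=
    (Commute.one_right a).sub_right ((Commute.refl a).mul_right hab)
  have hpow : (a * a * b - a) ^ (n + 1) = (-1) ^ (n + 1) * (a ^ (n + 1) - a ^ (n + 2) * b) := by
    rw [show a * a * b - a = -(a * (1 - a * b)) by noncomm_ring, neg_pow, ha.mul_pow,
      he.pow_succ_eq, mul_sub, mul_one, ← mul_assoc, ← pow_succ]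
  rw [hpow, (isUnit_neg_one.pow _).mul_right_eq_zero, sub_eq_zero]

open Unitization

theorem inr_pw (a : I) (n : ℕ) :
    ((pw a n : I) : Unitization ℤ I) = (a : Unitization ℤ I) ^ (n + 1) := by
  induction n with
  | zero => rw [pw, zero_add, pow_one]
  | succ n ih => rw [pw, inr_mul, ih, ← pow_succ]

theorem commute_inr_iff {a b : I} : Commute (a : Unitization ℤ I) b ↔ a * b = b * a := by
  rw [Commute, SemiconjBy, ← inr_mul, ← inr_mul, inr_injective.eq_iff]

theorem isSPiReg_iff_unitization (a : I) : IsSPiReg a ↔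
    ∃ n : ℕ, ∃ x : I, Commute (a : Unitization ℤ I) x ∧
      (a : Unitization ℤ I) ^ (n + 1) = (a : Unitization ℤ I) ^ (n + 2) * x := by
  simp only [IsSPiReg, commute_inr_iff, ← inr_pw, ← inr_mul, inr_injective.eq_iff]

theorem isNilp_iff_unitization (a : I) :
    IsNilp a ↔ ∃ n : ℕ, (a : Unitization ℤ I) ^ (n + 1) = 0 := by
  simp only [IsNilp, ← inr_pw, ← inr_zero, inr_injective.eq_iff]

theorem stmt8 (a : I) :
    IsSPiReg a ↔ ∃ b : I, inComm2 a b ∧ a * (b * b) = b ∧ IsNilp (a * a * b - a) := by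
  rw [isSPiReg_iff_unitization]
  constructor
  · rintro ⟨n, x, hax, h⟩
    have hD := IsDrazinInverse.of_pow_eq_pow_succ_mul hax h
    rw [← inr_pw, ← inr_pw, ← inr_mul] at hD
    generalize pw a n * pw x (n + 1) = b at hD
    refine ⟨b, fun y hy => ?_, ?_, ?_⟩
    · exact (commute_inr_iff.1 (hD.commute_of_commute (commute_inr_iff.2 hy))).symm
    · exact inr_injective (R := ℤ) (by simpa only [inr_mul] using hD.mul_mul_self)
    · obtain ⟨m, hm⟩ := hD.exists_pow_succ_eq
      refine (isNilp_iff_unitization _).2 ⟨m, ?_⟩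
      simpa only [inr_sub, inr_mul] using
        (sub_mul_pow_succ_eq_zero_iff (R := Unitization ℤ I) hD.commute hD.mul_mul_self m).2 hm
  · rintro ⟨b, hb, hab, hnil⟩
    have hba : Commute (a : Unitization ℤ I) b := commute_inr_iff.2 (hb a rfl).symm
    have hab' : (a : Unitization ℤ I) * (b * b) = b := by rw [← inr_mul, ← inr_mul, hab]
    obtain ⟨m, hm⟩ := (isNilp_iff_unitization _).1 hnil
    rw [inr_sub, inr_mul, inr_mul] at hm
    exact ⟨m, b, hba, (sub_mul_pow_succ_eq_zero_iff (R := Unitization ℤ I) hba hab' m).1 hm⟩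
end

section
/- An element a of a general ring I is strongly regular (a = aba for some b commuting with a) if and only if there exists b ∈ comm²(a) with a = a²b. -/
variable {I : Type*} [NonUnitalRing I]

theorem stmt9 (a : I) :
    IsStrReg a ↔ ∃ b : I, inComm2 a b ∧ a = a * a * b := by
  constructor
  · rintro ⟨b, h1, h2⟩
    obtain ⟨e, he⟩ : ∃ e, e = a * b := ⟨_, rfl⟩
    obtain ⟨c, hc⟩ : ∃ c, c = b * e := ⟨_, rfl⟩
    have he_a : e * a = a := by rw [he]; exact h2.symm
    have ha_e : a * e = a := by rw [he, h1, ← mul_assoc, ← h2]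
    have hee : e * e = e := by
      conv_lhs => rw [he, ← mul_assoc, ← h2, ← he]
    have hac : a * c = e := by
      conv_lhs => rw [hc, he, ← mul_assoc, ← mul_assoc, ← h2, ← he]
    have hca : c * a = e := by
      conv_lhs => rw [hc, he, mul_assoc, ← h2, ← h1, ← he]
    have hce : c * e = c := by
      conv_lhs => rw [hc, mul_assoc, hee, ← hc]
    have hec : e * c = c := by
      conv_lhs => rw [← hca, mul_assoc, hac, hce]
    have haac : a = a * a * c := by rw [mul_assoc, hac, ha_e]
    refine ⟨c, ?_, haac⟩
    intro y hy
    have h3 : a * (e * y) = a * y := by rw [← mul_assoc, ha_e]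
    have h4 : a * (e * y * e) = a * y := by
      conv_lhs => rw [← mul_assoc, ← mul_assoc, ha_e, ← hy, mul_assoc, ha_e, hy]
    have hey : e * y = e * y * e := by
      have k1 : e * y = c * (a * (e * y)) := by
        rw [← mul_assoc, hca, ← mul_assoc, hee]
      have k2 : e * y * e = c * (a * (e * y * e)) := by
        rw [← mul_assoc c, hca, ← mul_assoc, ← mul_assoc, hee]
      calc e * y = c * (a * (e * y)) := k1
        _ = c * (a * y) := by rw [h3]
        _ = c * (a * (e * y * e)) := by rw [h4]
        _ = e * y * e := k2.symm
    have hye : y * e = e * y := by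
      calc y * e = y * e * e := by rw [mul_assoc, hee]
        _ = y * e * (a * c) := by rw [hac]
        _ = y * (e * a) * c := by rw [← mul_assoc, mul_assoc y e a]
        _ = a * y * c := by rw [he_a, hy]
        _ = e * (a * y) * c := by rw [← mul_assoc e, he_a]
        _ = e * (y * a) * c := by rw [hy]
        _ = e * y * (a * c) := by rw [← mul_assoc, ← mul_assoc]
        _ = e * y * e := by rw [hac]
        _ = e * y := hey.symm
    calc c * y = c * (e * y) := by rw [← mul_assoc, hce]
      _ = c * (y * e) := by rw [hye]
      _ = c * y * (a * c) := by rw [hac, ← mul_assoc]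
      _ = c * (y * a) * c := by rw [← mul_assoc, mul_assoc c y a]
      _ = c * (a * y) * c := by rw [hy]
      _ = e * y * c := by rw [← mul_assoc, hca]
      _ = y * e * c := by rw [hye]
      _ = y * c := by rw [mul_assoc, hec]
  · rintro ⟨b, hb, hab⟩
    have hba : b * a = a * b := hb a rfl
    refine ⟨b, hba.symm, ?_⟩
    rw [mul_assoc, hba, ← mul_assoc]; exact hab
end

section
/- An element a of a general ring I is strongly π-regular if and only if a = s + n where s is strongly regular, n is nilpotent, and sn = ns = 0. -/
variable {I : Type*} [NonUnitalRing I]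

lemma pw_succ (a : I) (n : ℕ) : pw a (n+1) = pw a n * a := rfl

lemma pw_succ' (a : I) (n : ℕ) : pw a (n+1) = a * pw a n := by
  induction n with
  | zero => rfl
  | succ n ih => rw [pw_succ a (n+1), ih, mul_assoc, ← pw_succ, ih]

lemma pw_mul_pw (a : I) (m n : ℕ) : pw a m * pw a n = pw a (m + n + 1) := by
  induction n with
  | zero => rfl
  | succ n ih =>
    rw [pw_succ, ← mul_assoc, ih]
    rfl

lemma commute_pw {a x : I} (h : a * x = x * a) (n : ℕ) : pw x n * a = a * pw x n := by
  induction n with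
  | zero => exact h.symm
  | succ n ih => rw [pw_succ, mul_assoc, ← h, ← mul_assoc, ih, mul_assoc]

lemma commute_pw_pw {a x : I} (h : a * x = x * a) (m n : ℕ) :
    pw a m * pw x n = pw x n * pw a m :=
  commute_pw (commute_pw h n) m

theorem stmt10 (a : I) :
    IsSPiReg a ↔
      ∃ s n : I, IsStrReg s ∧ IsNilp n ∧ a = s + n ∧ s * n = 0 ∧ n * s = 0 := by
  constructor
  · rintro ⟨n, x, hc, h⟩
    -- iterated: pw a (n+k+1) * pw x k = pw a n
    have hiter : ∀ k : ℕ, pw a (n + k + 1) * pw x k = pw a n := by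
      intro k
      induction k with
      | zero => exact h.symm
      | succ k ih =>
        have h1 : pw a (n + (k+1) + 1) = pw a k * pw a (n + 1) := by
          rw [pw_mul_pw]; ring_nf
        rw [h1, pw_succ' x, ← mul_assoc, mul_assoc (pw a k), ← h, pw_mul_pw]
        have h2 : k + n + 1 = n + k + 1 := by ring
        rw [h2, ih]
    set e : I := pw a n * pw x n with he_def
    have hcomm_ax : pw a n * pw x n = pw x n * pw a n := commute_pw_pw hc n n
    have he : e * e = e := by
      have h1 : e * e = (pw a (n + n + 1) * pw x n) * pw x n := by
        rw [he_def, mul_assoc, ← mul_assoc (pw x n), ← hcomm_ax,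
          ← mul_assoc, ← mul_assoc, pw_mul_pw]
      rw [h1, hiter n]
    have hea : e * a = a * e := by
      rw [he_def]
      have h1 : pw a n * a = a * pw a n := commute_pw rfl n
      have h2 : pw x n * a = a * pw x n := commute_pw hc n
      rw [mul_assoc, h2, ← mul_assoc, h1, mul_assoc]
    have hex : e * x = x * e := by
      rw [he_def]
      have h1 : pw a n * x = x * pw a n := commute_pw hc.symm n
      have h2 : pw x n * x = x * pw x n := commute_pw rfl n
      rw [mul_assoc, h2, ← mul_assoc, h1, mul_assoc]
    have hK : a * (x * e) = e := by
      have h1 : x * e = pw a n * (x * pw x n) := by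
        rw [he_def, ← mul_assoc, ← commute_pw hc.symm n, mul_assoc]
      rw [h1, ← mul_assoc, ← pw_succ', ← mul_assoc, ← h, he_def]
    have hl1 : a * e * (x * e) = e := by
      rw [mul_assoc a e, ← mul_assoc e x e, hex, mul_assoc x e e, he, hK]
    have hl2 : x * e * (a * e) = e := by
      rw [mul_assoc x e, ← mul_assoc e a e, hea, mul_assoc a e e, he,
        ← mul_assoc x a e, ← hc, mul_assoc a x e, hK]
    have hl3 : e * (a * e) = a * e := by
      rw [← mul_assoc, hea, mul_assoc, he]
    refine ⟨a * e, a - a * e, ⟨x * e, ?_, ?_⟩, ⟨n, ?_⟩, by abel, ?_, ?_⟩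
    · rw [hl1, hl2]
    · rw [hl1]; exact hl3.symm
    · -- nilpotency : pw (a - a*e) n = 0
      have hd : ∀ j : ℕ, pw (a - a * e) j = pw a j - pw a j * e := by
        intro j
        induction j with
        | zero => rfl
        | succ j ih =>
          have t1 : pw a j * e * a = pw a (j+1) * e := by
            rw [mul_assoc, hea, ← mul_assoc, ← pw_succ]
          have t2 : pw a j * e * (a * e) = pw a (j+1) * e := by
            rw [mul_assoc, hl3, ← mul_assoc, ← pw_succ]
          have t3 : pw a j * (a * e) = pw a (j+1) * e := by
            rw [← mul_assoc, ← pw_succ]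
          calc pw (a - a * e) (j+1) = pw (a - a * e) j * (a - a * e) := rfl
            _ = (pw a j - pw a j * e) * (a - a * e) := by rw [ih]
            _ = pw a j * (a - a * e) - pw a j * e * (a - a * e) := by rw [sub_mul]
            _ = (pw a j * a - pw a j * (a * e)) - (pw a j * e * a - pw a j * e * (a * e)) := by
                rw [mul_sub, mul_sub]
            _ = (pw a (j+1) - pw a (j+1) * e) - (pw a (j+1) * e - pw a (j+1) * e) := by
                rw [t1, t2, t3, ← pw_succ]
            _ = pw a (j+1) - pw a (j+1) * e := by abel
      rw [hd n, he_def, ← mul_assoc, pw_mul_pw, hiter n, sub_self]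
    · -- (a*e) * (a - a*e) = 0
      rw [mul_sub, mul_assoc a e a, hea, mul_assoc a e (a * e), hl3, sub_self]
    · -- (a - a*e) * (a*e) = 0
      rw [sub_mul, mul_assoc a e (a * e), hl3, sub_self]
  · rintro ⟨s, nn, ⟨t, hcomm, hsbs⟩, ⟨k, hnil⟩, ha, hsn, hns⟩
    -- hcomm : s * t = t * s, hsbs : s = s * t * s
    have hsts : s * t * s = s := hsbs.symm
    obtain ⟨e, he_def⟩ : ∃ e : I, e = s * t := ⟨_, rfl⟩
    obtain ⟨g, hg_def⟩ : ∃ g : I, g = t * s * t := ⟨_, rfl⟩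
    have he : e * e = e := by rw [he_def, ← mul_assoc, hsts]
    have hes : e * s = s := by rw [he_def]; exact hsts
    have hse : s * e = s := by rw [he_def, hcomm, ← mul_assoc, hsts]
    have ht_ss : t * (s * s) = s := by rw [← mul_assoc, ← hcomm]; exact hsts
    have heg_t : e * t = g := by rw [hg_def, he_def, hcomm]
    have heg : e * g = g := by rw [← heg_t, ← mul_assoc, he]
    have hgss : g * (s * s) = s := by rw [← heg_t, mul_assoc, ht_ss, hes]
    have hsg : s * g = g * s := by
      have hst : Commute s t := hcomm
      have hcg : Commute s g := by
        rw [hg_def]; exact (hst.mul_right (Commute.refl s)).mul_right hst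
      exact hcg
    -- claim D
    have hD : ∀ j : ℕ, pw g (j+1) * pw s (2*j+2) = pw s j := by
      intro j
      induction j with
      | zero =>
        show (g * g) * ((s * s) * s) = s
        rw [mul_assoc g g, ← mul_assoc g (s*s) s, hgss, hgss]
      | succ j ih =>
        have h1 : pw s (2*(j+1)+2) = s * (s * pw s (2*j+2)) := by
          have h2 : 2*(j+1)+2 = (2*j+2)+1+1 := by ring
          rw [h2, pw_succ', pw_succ']
        rw [pw_succ g (j+1), h1, mul_assoc (pw g (j+1)) g,
          ← mul_assoc g s (s * pw s (2*j+2)), ← mul_assoc (g*s) s (pw s (2*j+2)),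
          mul_assoc g s s, hgss, ← pw_succ', pw_succ s (2*j+2), ← mul_assoc, ih]
        rfl
    have hpse : ∀ j, pw s j * e = pw s j := by
      intro j
      induction j with
      | zero => exact hse
      | succ j ih => rw [pw_succ, mul_assoc, hse]
    have hepg : ∀ j, e * pw g j = pw g j := by
      intro j
      induction j with
      | zero => exact heg
      | succ j ih => rw [pw_succ' g, ← mul_assoc, heg]
    have hpsn : ∀ j, pw s j * nn = 0 := by
      intro j
      induction j with
      | zero => exact hsn
      | succ j ih => rw [pw_succ, mul_assoc, hsn, mul_zero]
    have hpns : ∀ j, pw nn j * s = 0 := by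
      intro j
      induction j with
      | zero => exact hns
      | succ j ih => rw [pw_succ, mul_assoc, hns, mul_zero]
    have hpa : ∀ j, pw a j = pw s j + pw nn j := by
      intro j
      induction j with
      | zero => exact ha
      | succ j ih =>
        rw [pw_succ a j, ih, ha, add_mul, mul_add, mul_add, hpsn j, hpns j,
          add_zero, zero_add, ← pw_succ, ← pw_succ]
    have hnne : nn * e = 0 := by rw [he_def, ← mul_assoc, hns, zero_mul]
    have hsG : s * pw g (k+1) = pw g (k+1) * s := (commute_pw hsg (k+1)).symm
    refine ⟨k, e * (pw g (k+1) * pw s k), ?_, ?_⟩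
    · -- commutation
      have lhs1 : a * (e * (pw g (k+1) * pw s k)) = pw g (k+1) * pw s (k+1) := by
        rw [ha, add_mul, ← mul_assoc nn e, hnne, zero_mul, add_zero,
          ← mul_assoc s e, hse, ← mul_assoc s, hsG, mul_assoc, ← pw_succ']
      have rhs1 : (e * (pw g (k+1) * pw s k)) * a = pw g (k+1) * pw s (k+1) := by
        rw [ha, mul_add]
        have t1 : e * (pw g (k+1) * pw s k) * s = pw g (k+1) * pw s (k+1) := by
          rw [mul_assoc, mul_assoc (pw g (k+1)), ← pw_succ, ← mul_assoc, hepg]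
        have t2 : e * (pw g (k+1) * pw s k) * nn = 0 := by
          rw [mul_assoc, mul_assoc (pw g (k+1)), hpsn k, mul_zero, mul_zero]
        rw [t1, t2, add_zero]
      rw [lhs1, rhs1]
    · -- pw a k = pw a (k+1) * x
      have hak : pw a k = pw s k := by rw [hpa k, hnil, add_zero]
      have hak1 : pw a (k+1) = pw s (k+1) := by
        rw [hpa (k+1), pw_succ nn k, hnil, zero_mul, add_zero]
      rw [hak, hak1, ← mul_assoc, hpse (k+1), ← mul_assoc,
        commute_pw_pw hsg (k+1) (k+1), mul_assoc, pw_mul_pw]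
      have h3 : k + 1 + k + 1 = 2*k+2 := by ring
      rw [h3, hD k]
end

section
/- An element a of a general ring I is quasipolar if and only if a = s + q where s is strongly regular, s ∈ comm²(a), q ∈ QN(I), and sq = qs = 0. -/
variable {I : Type*} [NonUnitalRing I]

/-- If `w` is a quasi-inverse of `v`, then anything commuting with `v` commutes with `w`. -/
lemma comm_aux {v w x : I} (hwv : w * v = v + w) (hvw : v * w = v + w)
    (hxv : x * v = v * x) : x * w = w * x := by
  have h1 : x * w - w * x = v * (x * w - w * x) := by
    have e1 : v * (x * w) = x * v + x * w := by
      rw [← mul_assoc, ← hxv, mul_assoc, hvw, mul_add]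
    have e2 : v * (w * x) = v * x + w * x := by
      rw [← mul_assoc, hvw, add_mul]
    rw [mul_sub, e1, e2, hxv]; abel
  have h2 : w * (x * w - w * x) = (x * w - w * x) + w * (x * w - w * x) := by
    conv_lhs => rw [h1, ← mul_assoc, hwv, add_mul, ← h1]
  have h3 : (0 : I) = x * w - w * x := add_right_cancel ((zero_add _).trans h2)
  exact sub_eq_zero.mp h3.symm

/-- Sum of orthogonal quasi-invertible elements is quasi-invertible. -/
lemma inQ_add {x y : I} (hx : inQ x) (hy : inQ y)
    (hxy : x * y = 0) (hyx : y * x = 0) : inQ (x + y) := by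
  obtain ⟨x', hx1, hx2⟩ := hx
  obtain ⟨y', hy1, hy2⟩ := hy
  have hx'x : x' * x = x' + x := (sub_eq_zero.mp hx1).symm
  have hxx' : x * x' = x + x' := (sub_eq_zero.mp hx2).symm
  have hy'y : y' * y = y' + y := (sub_eq_zero.mp hy1).symm
  have hyy' : y * y' = y + y' := (sub_eq_zero.mp hy2).symm
  have hx'y : x' * y = 0 := by
    have h : x' = x' * x - x := by rw [hx'x]; abel
    calc x' * y = (x' * x - x) * y := by rw [← h]
      _ = x' * (x * y) - x * y := by rw [sub_mul, mul_assoc]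
      _ = 0 := by rw [hxy, mul_zero, sub_zero]
  have hyx' : y * x' = 0 := by
    have h : x' = x * x' - x := by rw [hxx']; abel
    calc y * x' = y * (x * x' - x) := by rw [← h]
      _ = (y * x) * x' - y * x := by rw [mul_sub, mul_assoc]
      _ = 0 := by rw [hyx, zero_mul, sub_zero]
  have hxy' : x * y' = 0 := by
    have h : y' = y * y' - y := by rw [hyy']; abel
    calc x * y' = x * (y * y' - y) := by rw [← h]
      _ = (x * y) * y' - x * y := by rw [mul_sub, mul_assoc]
      _ = 0 := by rw [hxy, zero_mul, sub_zero]
  refine ⟨y' + x' - y' * x', ?_, ?_⟩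
  · have e1 : (y' * x') * x = y' * x' + y' * x := by
      rw [mul_assoc, hx'x, mul_add]
    have e2 : (y' * x') * y = 0 := by
      rw [mul_assoc, hx'y, mul_zero]
    have e : (y' + x' - y' * x') * (x + y) = x' * x + y' * y - y' * x' := by
      rw [mul_add, sub_mul, add_mul, sub_mul, add_mul, e1, e2, hx'y]
      abel
    rw [e, hx'x, hy'y]; abel
  · have e1 : x * (y' * x') = 0 := by
      rw [← mul_assoc, hxy', zero_mul]
    have e2 : y * (y' * x') = y * x' + y' * x' := by
      rw [← mul_assoc, hyy', add_mul]
    have e : (x + y) * (y' + x' - y' * x') = x * x' + y * y' - y' * x' := by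
      rw [add_mul, mul_sub, mul_add, mul_sub, mul_add, e1, e2, hxy', hyx']
      abel
    rw [e, hxx', hyy']; abel

theorem stmt12 (a : I) :
    IsQuasipolarElem a ↔
      ∃ s q : I, IsStrReg s ∧ inComm2 a s ∧ inQN q ∧ a = s + q ∧ s * q = 0 ∧ q * s = 0 := by
  constructor
  · rintro ⟨p, hp2, hpc, ⟨w, hw1, hw2⟩, hQN⟩
    have hpa : p * a = a * p := hpc a rfl
    have hwv : w * (a + p) = (a + p) + w := by
      have h := sub_eq_zero.mp hw1; rw [← h]; abel
    have hvw : (a + p) * w = (a + p) + w := by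
      have h := sub_eq_zero.mp hw2; rw [← h]
    have hav : a * (a + p) = (a + p) * a := by rw [mul_add, add_mul, hpa]
    have hpv : p * (a + p) = (a + p) * p := by rw [mul_add, add_mul, hpa, hp2]
    have haw : a * w = w * a := comm_aux hwv hvw hav
    have hpw : p * w = w * p := comm_aux hwv hvw hpv
    have hwa : w * a = a * w := haw.symm
    have hwp : w * p = p * w := hpw.symm
    -- handy "push a/p left" rules
    have hpa' : ∀ x : I, p * (a * x) = a * (p * x) := fun x => by
      rw [← mul_assoc, hpa, mul_assoc]
    have hwa' : ∀ x : I, w * (a * x) = a * (w * x) := fun x => by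
      rw [← mul_assoc, hwa, mul_assoc]
    have hwp' : ∀ x : I, w * (p * x) = p * (w * x) := fun x => by
      rw [← mul_assoc, hwp, mul_assoc]
    have hpp' : ∀ x : I, p * (p * x) = p * x := fun x => by
      rw [← mul_assoc, hp2]
    -- key identity : a²pw = a²p + ap
    have h2 : a * p * (a + p) = a * a * p + a * p := by
      rw [mul_add]
      congr 1
      · rw [mul_assoc, hpa, ← mul_assoc]
      · rw [mul_assoc, hp2]
    have h3 : a * a * p * w + a * p * w = (a * a * p + a * p) + a * p * w := by
      calc a * a * p * w + a * p * w = (a * a * p + a * p) * w := by rw [add_mul]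
        _ = (a * p * (a + p)) * w := by rw [h2]
        _ = a * p * ((a + p) * w) := by rw [mul_assoc]
        _ = a * p * (a + p) + a * p * w := by rw [hvw, mul_add]
        _ = (a * a * p + a * p) + a * p * w := by rw [h2]
    have hkey : a * a * p * w = a * a * p + a * p := add_right_cancel h3
    have hkey' : a * (a * (p * w)) = a * (a * p) + a * p := by
      rw [← mul_assoc, ← mul_assoc, hkey, mul_assoc]
    refine ⟨a * p, a - a * p, ⟨p * w - p, ?_, ?_⟩, ?_, hQN, by abel, ?_, ?_⟩
    · simp only [mul_sub, sub_mul, mul_assoc, hpa, hwa, hwp, hp2, hpa', hwa', hwp', hpp']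
    · simp only [mul_sub, sub_mul, mul_assoc, hpa, hwa, hwp, hp2, hpa', hwa', hwp', hpp', hkey']
      abel
    · intro y hy
      have hpy : p * y = y * p := hpc y hy
      rw [mul_assoc, hpy, ← mul_assoc, ← hy, mul_assoc]
    · simp only [mul_sub, sub_mul, mul_assoc, hpa, hwa, hwp, hp2, hpa', hwa', hwp', hpp']
      abel
    · simp only [mul_sub, sub_mul, mul_assoc, hpa, hwa, hwp, hp2, hpa', hwa', hwp', hpp']
      abel
  · rintro ⟨s, q, ⟨t, hst, hsts⟩, hsc, hqQN, haeq, hsq, hqs⟩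
    set p := s * t with hpdef
    set g := t * p with hgdef
    have hps : p * s = s := hsts.symm
    have hp2 : p * p = p := by
      nth_rewrite 2 [hpdef]
      rw [← mul_assoc, hps]
    have hsp : s * p = s := by
      rw [hst, ← mul_assoc, ← hpdef, hps]
    have hgs : g * s = p := by
      rw [hgdef, mul_assoc, hps, ← hst]
    have hsg : s * g = p := by
      rw [hgdef, ← mul_assoc, ← hpdef, hp2]
    have hgp : g * p = g := by
      rw [hgdef, mul_assoc, hp2]
    have hpg : p * g = g := by
      nth_rewrite 1 [hst]
      rw [mul_assoc, hsg, ← hgdef]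
    have hqp : q * p = 0 := by
      rw [hpdef, ← mul_assoc, hqs, zero_mul]
    have hpq : p * q = 0 := by
      rw [← hgs, mul_assoc, hsq, mul_zero]
    have hap : a * p = s := by
      rw [haeq, add_mul, hsp, hqp, add_zero]
    refine ⟨p, hp2, ?_, ?_, ?_⟩
    · -- p ∈ comm²(a)
      intro y hy
      have hsy : s * y = y * s := hsc y hy
      have k1 : p * (y * s) = y * s := by
        rw [← hsy, ← mul_assoc, hps]
      have k2 : y * p = p * (y * p) := by
        calc y * p = y * (s * t) := by rw [hpdef]
          _ = (y * s) * t := by rw [← mul_assoc]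
          _ = (p * (y * s)) * t := by rw [k1]
          _ = p * ((y * s) * t) := by rw [mul_assoc]
          _ = p * (y * (s * t)) := by rw [mul_assoc y s t]
          _ = p * (y * p) := by rw [← hpdef]
      have k3 : s * y = (s * y) * p := by
        rw [hsy, mul_assoc, hsp]
      have k4 : p * y = (p * y) * p := by
        calc p * y = t * (s * y) := by rw [hst, mul_assoc]
          _ = t * ((s * y) * p) := by rw [← k3]
          _ = (t * (s * y)) * p := by rw [← mul_assoc]
          _ = (p * y) * p := by rw [← mul_assoc t s y, ← hst]
      rw [k2, ← mul_assoc, ← k4]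
    · -- a + p quasi-invertible
      have hq2 : inQ (q * q) := hqQN q rfl
      obtain ⟨r, hr1, hr2⟩ := hq2
      have hrqq : r * (q * q) = (q * q) + r := by
        have h := sub_eq_zero.mp hr1; rw [← h]; abel
      have hqqr : (q * q) * r = (q * q) + r := by
        have h := sub_eq_zero.mp hr2; rw [← h]
      have hqr : q * r = r * q := comm_aux hrqq hqqr (mul_assoc q q q).symm
      have hq : inQ q := by
        refine ⟨r - q + q * r, ?_, ?_⟩
        · have e : (r - q + q * r) * q = q * r - q * q + (q * q) * r := by
            rw [add_mul, sub_mul, mul_assoc q r q, ← hqr, ← mul_assoc q q r]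
          rw [e]
          have h : r - q + q * r + q - (q * r - q * q + q * q * r)
              = q * q + r - q * q * r := by abel
          rw [h]; exact hr2
        · have e : q * (r - q + q * r) = q * r - q * q + (q * q) * r := by
            rw [mul_add, mul_sub, ← mul_assoc q q r]
          rw [e]
          have h : q + (r - q + q * r) - (q * r - q * q + q * q * r)
              = q * q + r - q * q * r := by abel
          rw [h]; exact hr2
      have hpsQ : inQ (p + s) := by
        refine ⟨p + g, ?_, ?_⟩
        · have e : (p + g) * (p + s) = p * p + p * s + (g * p + g * s) := by
            rw [add_mul, mul_add, mul_add]
          rw [e, hp2, hps, hgp, hgs]; abel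
        · have e : (p + s) * (p + g) = p * p + p * g + (s * p + s * g) := by
            rw [add_mul, mul_add, mul_add]
          rw [e, hp2, hpg, hsp, hsg]; abel
      have h0a : (p + s) * q = 0 := by rw [add_mul, hpq, hsq, add_zero]
      have h0b : q * (p + s) = 0 := by rw [mul_add, hqp, hqs, add_zero]
      have heq : a + p = (p + s) + q := by rw [haeq]; abel
      rw [heq]
      exact inQ_add hpsQ hq h0a h0b
    · have heq : a - a * p = q := by rw [hap, haeq]; abel
      rw [heq]
      exact hqQN
end

section
/- A general ring I is strongly regular (every element is strongly regular) if and only if I is quasipolar (every element is quasipolar) and QN(I) = 0. -/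
variable {I : Type*} [NonUnitalRing I]

theorem stmt14 :
    (∀ a : I, IsStrReg a) ↔
      (∀ a : I, IsQuasipolarElem a) ∧ (∀ q : I, inQN q → q = 0) := by
  constructor
  · intro hsr
    constructor
    · -- quasipolar
      intro a
      obtain ⟨b, hc, he⟩ := hsr a
      have f2 : (a * b) * a = a := he.symm
      have f3 : a * (a * b) = a := by
        calc a * (a * b) = a * (b * a) := by rw [hc]
        _ = a * b * a := (mul_assoc _ _ _).symm
        _ = a := he.symm
      have f1 : (a * b) * (a * b) = a * b := by
        calc (a * b) * (a * b) = ((a * b) * a) * b := (mul_assoc _ _ _).symm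
        _ = a * b := by rw [f2]
      have f4 : a * (b * a * b) = a * b := by
        calc a * (b * a * b) = a * (b * a) * b := by rw [mul_assoc a (b*a) b]
        _ = (a * b * a) * b := by rw [mul_assoc a b a]
        _ = a * b := by rw [f2]
      have f5 : (b * a * b) * a = a * b := by
        calc (b * a * b) * a = (b * a) * (b * a) := by rw [mul_assoc (b*a) b a]
        _ = b * (a * (b * a)) := by rw [mul_assoc]
        _ = b * ((a * b) * a) := by rw [mul_assoc a b a]
        _ = b * a := by rw [f2]
        _ = a * b := hc.symm
      have f8 : b * a * b = (a * b) * b := by rw [hc]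
      have f6 : (a * b) * (b * a * b) = b * a * b := by
        rw [f8, ← mul_assoc, f1]
      have f7 : (b * a * b) * (a * b) = b * a * b := by
        calc (b * a * b) * (a * b) = ((b * a * b) * a) * b := (mul_assoc _ _ _).symm
        _ = ((a * b)) * b := by rw [f5]
        _ = b * a * b := f8.symm
      refine ⟨a * b, f1, ?_, ⟨(a * b) + (b * a * b), ?_, ?_⟩, ?_⟩
      · -- comm2
        intro y hy
        have step1 : a * ((a * b) * y - y * (a * b)) = 0 := by
          have l1 : a * ((a * b) * y) = a * y := by rw [← mul_assoc, f3]
          have l2 : a * (y * (a * b)) = a * y := by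
            rw [← mul_assoc, ← hy, mul_assoc, f3]
          rw [mul_sub, l1, l2, sub_self]
        have step2 : (a * b) * (y * (a * b)) = y * (a * b) := by
          calc (a * b) * (y * (a * b)) = (a * b) * (y * (a * (b * a * b))) := by rw [f4]
          _ = (a * b) * ((y * a) * (b * a * b)) := by rw [mul_assoc y a _]
          _ = (a * b) * ((a * y) * (b * a * b)) := by rw [hy]
          _ = ((a * b) * (a * y)) * (b * a * b) := (mul_assoc _ _ _).symm
          _ = (((a * b) * a) * y) * (b * a * b) := by rw [mul_assoc (a*b) a y]
          _ = (a * y) * (b * a * b) := by rw [f2]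
          _ = (y * a) * (b * a * b) := by rw [hy]
          _ = y * (a * (b * a * b)) := mul_assoc _ _ _
          _ = y * (a * b) := by rw [f4]
        have step3 : (a * b) * ((a * b) * y - y * (a * b))
            = (a * b) * y - y * (a * b) := by
          rw [mul_sub, ← mul_assoc, f1, step2]
        have step4 : (a * b) * y - y * (a * b) = 0 := by
          calc (a * b) * y - y * (a * b)
              = (a * b) * ((a * b) * y - y * (a * b)) := step3.symm
          _ = ((b * a * b) * a) * ((a * b) * y - y * (a * b)) := by rw [f5]
          _ = (b * a * b) * (a * ((a * b) * y - y * (a * b))) := mul_assoc _ _ _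
          _ = (b * a * b) * 0 := by rw [step1]
          _ = 0 := mul_zero _
        exact sub_eq_zero.mp step4
      · have expand : ((a * b) + (b * a * b)) * (a + (a * b))
            = a + (a * b) + (a * b) + (b * a * b) := by
          rw [add_mul, mul_add, mul_add, f2, f1, f5, f7]
          abel
        rw [expand]; abel
      · have expand : (a + (a * b)) * ((a * b) + (b * a * b))
            = a + (a * b) + (a * b) + (b * a * b) := by
          rw [add_mul, mul_add, mul_add, f3, f4, f1, f6]
          abel
        rw [expand]; abel
      · -- inQN (a - a*(a*b))
        have : a - a * (a * b) = 0 := by rw [f3, sub_self]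
        rw [this]
        intro x _
        exact ⟨0, by simp, by simp⟩
    · -- QN = 0
      intro q hq
      obtain ⟨b, hc, he⟩ := hsr q
      obtain ⟨p, hp1, _⟩ := hq b hc
      have f1 : (q * b) * (q * b) = q * b := by
        calc (q * b) * (q * b) = ((q * b) * q) * b := (mul_assoc _ _ _).symm
        _ = q * b := by rw [← he]
      have hp1' : p * (q * b) = p + q * b := by
        have := sub_eq_zero.mp hp1
        exact this.symm
      have hz : q * b = 0 := by
        have t : p * ((q * b) * (q * b)) = (p + q * b) * (q * b) := by
          rw [← mul_assoc, hp1']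
        rw [f1, hp1'] at t
        rw [add_mul, hp1', f1] at t
        -- t : p + q * b = p + q * b + q * b
        exact (left_eq_add.mp t)
      calc q = q * b * q := he
      _ = 0 * q := by rw [hz]
      _ = 0 := zero_mul _
  · rintro ⟨hqp, hqn0⟩ a
    obtain ⟨p, hpp, hcomm2, ⟨q, hq1, hq2⟩, hqn⟩ := hqp a
    have g1 : a * p = a := (sub_eq_zero.mp (hqn0 _ hqn)).symm
    have g2 : p * a = a := by rw [hcomm2 a rfl, g1]
    have hap : (a + p) * p = a + p := by rw [add_mul, g1, hpp]
    have hpa : p * (a + p) = a + p := by rw [mul_add, g2, hpp]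
    have hq1' : q * (a + p) = q + (a + p) := (sub_eq_zero.mp hq1).symm
    have hq2' : (a + p) * q = (a + p) + q := by
      have := (sub_eq_zero.mp hq2).symm
      rw [this]
    have gqp : q * p = q := by
      have t : (q * (a + p)) * p = (q + (a + p)) * p := by rw [hq1']
      rw [mul_assoc, hap, hq1', add_mul, hap] at t
      exact (add_right_cancel t).symm
    have g3 : q * a = a + p := by
      have t : q * a + q * p = q + (a + p) := by rw [← mul_add, hq1']
      rw [gqp, add_comm (q*a) q] at t
      exact add_left_cancel t
    have gpq : p * q = q := by
      have t : p * ((a + p) * q) = p * ((a + p) + q) := by rw [hq2']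
      rw [← mul_assoc, hpa, hq2', mul_add, hpa] at t
      exact (add_left_cancel t).symm
    have g4 : a * q = a + p := by
      have t : a * q + p * q = (a + p) + q := by rw [← add_mul, hq2']
      rw [gpq] at t
      exact add_right_cancel t
    have hab : a * (p * q * p - p) = p := by
      have l : a * (p * q * p) = a + p := by
        calc a * ((p * q) * p) = (a * (p * q)) * p := (mul_assoc _ _ _).symm
        _ = ((a * p) * q) * p := by rw [mul_assoc a p q]
        _ = (a * q) * p := by rw [g1]
        _ = (a + p) * p := by rw [g4]
        _ = a + p := hap
      rw [mul_sub, l, g1, add_sub_cancel_left]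
    have hba : (p * q * p - p) * a = p := by
      have l : (p * q * p) * a = a + p := by
        calc ((p * q) * p) * a = (p * q) * (p * a) := mul_assoc _ _ _
        _ = (p * q) * a := by rw [g2]
        _ = p * (q * a) := mul_assoc _ _ _
        _ = p * (a + p) := by rw [g3]
        _ = a + p := hpa
      rw [sub_mul, l, g2, add_sub_cancel_left]
    refine ⟨p * q * p - p, by rw [hab, hba], ?_⟩
    rw [hab, g2]
end

section
/- Let I be a general ring and e² = e ∈ I. Then QN(eIe) = eIe ∩ QN(I). -/
variable {I : Type*} [NonUnitalRing I]

/-- A quasi-inverse of an element of the corner lies in the corner. -/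
lemma corner_qinv (e a p : I)
    (ha1 : e * a = a) (ha2 : a * e = a)
    (h1 : p + a - p * a = 0) (h2 : a + p - a * p = 0) : e * p * e = p := by
  have hpa : p * a = p + a := (sub_eq_zero.mp h1).symm
  have hap : a * p = a + p := (sub_eq_zero.mp h2).symm
  -- first: p * e = p
  have hu : a * (p * e - p) = p * e - p := by
    rw [mul_sub, ← mul_assoc, hap, add_mul, ha2]; abel
  have hpe : p * e = p := by
    have h3 : p * (p * e - p) = p * (p * e - p) + (p * e - p) := by
      calc p * (p * e - p) = p * (a * (p * e - p)) := by rw [hu]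
        _ = (p * a) * (p * e - p) := by rw [mul_assoc]
        _ = (p + a) * (p * e - p) := by rw [hpa]
        _ = p * (p * e - p) + a * (p * e - p) := by rw [add_mul]
        _ = p * (p * e - p) + (p * e - p) := by rw [hu]
    exact sub_eq_zero.mp (left_eq_add.mp h3)
  -- second: e * p = p
  have hv : (e * p - p) * a = e * p - p := by
    rw [sub_mul, mul_assoc, hpa, mul_add, ha1]; abel
  have hep : e * p = p := by
    have h3 : (e * p - p) * p = (e * p - p) * p + (e * p - p) := by
      calc (e * p - p) * p = ((e * p - p) * a) * p := by rw [hv]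
        _ = (e * p - p) * (a * p) := by rw [mul_assoc]
        _ = (e * p - p) * (a + p) := by rw [hap]
        _ = (e * p - p) * a + (e * p - p) * p := by rw [mul_add]
        _ = (e * p - p) + (e * p - p) * p := by rw [hv]
        _ = (e * p - p) * p + (e * p - p) := by abel
    exact sub_eq_zero.mp (left_eq_add.mp h3)
  rw [hep, hpe]

theorem stmt17 (e : I) (he : e * e = e) :
    {q : I | e * q * e = q ∧ ∀ x : I, e * x * e = x → q * x = x * q →
        ∃ p : I, e * p * e = p ∧ p + q * x - p * (q * x) = 0 ∧ q * x + p - q * x * p = 0}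
    = {q : I | e * q * e = q ∧ inQN q} := by
  ext q
  simp only [Set.mem_setOf_eq]
  constructor
  · rintro ⟨hq, H⟩
    refine ⟨hq, ?_⟩
    have hqe : q * e = q := by rw [← hq, mul_assoc, mul_assoc, he, ← mul_assoc]
    have heq : e * q = q := by rw [← hq, ← mul_assoc, ← mul_assoc, he]
    intro x hcomm
    set x' := e * x * e with hx'
    have hx'e : e * x' * e = x' := by
      rw [hx', ← mul_assoc, ← mul_assoc, he, mul_assoc, mul_assoc, he, ← mul_assoc]
    have hqx' : q * x' = q * x := by
      rw [hx', ← mul_assoc, ← mul_assoc, hqe]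
      conv_lhs => rw [hcomm, mul_assoc, hqe]
      exact hcomm.symm
    have hx'q : x' * q = q * x := by
      rw [hx', mul_assoc (e * x) e q, heq, mul_assoc, ← hcomm, ← mul_assoc, heq]
    obtain ⟨p, _, h1, h2⟩ := H x' hx'e (hqx'.trans hx'q.symm)
    rw [hqx'] at h1 h2
    exact ⟨p, h1, h2⟩
  · rintro ⟨hq, H⟩
    refine ⟨hq, ?_⟩
    intro x hxe hcomm
    have hqe : q * e = q := by rw [← hq, mul_assoc, mul_assoc, he, ← mul_assoc]
    have heq : e * q = q := by rw [← hq, ← mul_assoc, ← mul_assoc, he]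
    have hxe' : x * e = x := by rw [← hxe, mul_assoc, mul_assoc, he, ← mul_assoc]
    obtain ⟨p, h1, h2⟩ := H x hcomm
    refine ⟨p, ?_, h1, h2⟩
    exact corner_qinv e (q * x) p (by rw [← mul_assoc, heq]) (by rw [mul_assoc, hxe']) h1 h2
end
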